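/- arXiv:2510.17673 — 3 statements merged into one kernel-verified Lean document; each statement's English description precedes it below -/
import Mathlib

section
/- Let κ > 0, c > 0, D > 0 be real numbers and δ ≥ 1/2. Define ϑ : [0,∞) × [0,∞) → ℝ by ϑ(X,Y) = (κ·Y·X² + c·(1+Y)^{2δ}·X²)/(e + X²) − 2c·(1+Y)^{2δ}·X⁴/(e + X²)² + c·(1+Y)^{2δ}·X⁴/((e + X²)²·(1 + log(e + X²))), and define h : [0,∞) → ℝ by h(x) = κ·(1+x)^{1−2δ} + c − 2c·(x²/(D²·e + x²))² + c/(1 − 2·log D + log(D²·e + x²)). Then for all X ≥ 0 and Y ≥ 0 with Y ≤ D·X, one has ϑ(X,Y) ≤ (1+Y)^{2δ}·h(Y). -/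
open Real Filter

/-- for `X, Y ≥ 0` with `Y ≤ D·X`, the functional
`ϑ(X,Y) = (κYX² + c(1+Y)^{2δ}X²)/(e+X²) - 2c(1+Y)^{2δ}X⁴/(e+X²)²
          + c(1+Y)^{2δ}X⁴/((e+X²)²(1+log(e+X²)))`
is bounded by `(1+Y)^{2δ} · h(Y)`, where
`h(y) = κ(1+y)^{1-2δ} + c - 2c (y²/(D²e+y²))² + c/(1 - 2 log D + log(D²e + y²))`. -/
theorem stmt5 (κ c D δ : ℝ) (hκ : 0 < κ) (hc : 0 < c) (hD : 0 < D) (hδ : 1 / 2 ≤ δ) :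
    ∀ X Y : ℝ, 0 ≤ X → 0 ≤ Y → Y ≤ D * X →
      (κ * Y * X ^ 2 + c * (1 + Y) ^ (2 * δ) * X ^ 2) / (Real.exp 1 + X ^ 2)
        - 2 * c * (1 + Y) ^ (2 * δ) * X ^ 4 / (Real.exp 1 + X ^ 2) ^ 2
        + c * (1 + Y) ^ (2 * δ) * X ^ 4 /
            ((Real.exp 1 + X ^ 2) ^ 2 * (1 + Real.log (Real.exp 1 + X ^ 2)))
      ≤ (1 + Y) ^ (2 * δ) *
          (κ * (1 + Y) ^ (1 - 2 * δ) + c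
            - 2 * c * (Y ^ 2 / (D ^ 2 * Real.exp 1 + Y ^ 2)) ^ 2
            + c / (1 - 2 * Real.log D + Real.log (D ^ 2 * Real.exp 1 + Y ^ 2))) := by
  intro X Y hX hY hYX
  have he1 : (1 : ℝ) ≤ Real.exp 1 := by
    have := Real.add_one_le_exp (1 : ℝ); linarith
  have he0 : (0 : ℝ) < Real.exp 1 := Real.exp_pos 1
  set e : ℝ := Real.exp 1 with he_def
  have hE : (0 : ℝ) < e + X ^ 2 := by positivity
  have h1Y : (0 : ℝ) < 1 + Y := by linarith
  set P : ℝ := (1 + Y) ^ (2 * δ) with hP_def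
  have hP : 0 < P := Real.rpow_pos_of_pos h1Y _
  set r : ℝ := Y ^ 2 / (D ^ 2 * e + Y ^ 2) with hr_def
  set L : ℝ := 1 - 2 * Real.log D + Real.log (D ^ 2 * e + Y ^ 2) with hL_def
  set Lg : ℝ := 1 + Real.log (e + X ^ 2) with hLg_def
  have hY2 : Y ^ 2 ≤ D ^ 2 * X ^ 2 := by nlinarith
  have hDe : (0 : ℝ) < D ^ 2 * e + Y ^ 2 := by positivity
  -- log facts
  have hlogE : 1 ≤ Real.log (e + X ^ 2) := by
    have h1 : e ≤ e + X ^ 2 := by nlinarith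
    calc (1 : ℝ) = Real.log e := (Real.log_exp 1).symm
      _ ≤ Real.log (e + X ^ 2) := Real.log_le_log he0 h1
  have h2Lg : (2 : ℝ) ≤ Lg := by rw [hLg_def]; linarith
  have h2L : (2 : ℝ) ≤ L := by
    have h1 : D ^ 2 * e ≤ D ^ 2 * e + Y ^ 2 := by nlinarith
    have h2 : Real.log (D ^ 2 * e) ≤ Real.log (D ^ 2 * e + Y ^ 2) :=
      Real.log_le_log (by positivity) h1
    have h3 : Real.log (D ^ 2 * e) = 2 * Real.log D + 1 := by
      rw [Real.log_mul (by positivity) (ne_of_gt he0), Real.log_pow, Real.log_exp]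
      push_cast; ring
    rw [hL_def]; linarith
  have hLle : L ≤ Lg := by
    have h1 : D ^ 2 * e + Y ^ 2 ≤ D ^ 2 * (e + X ^ 2) := by nlinarith
    have h2 : Real.log (D ^ 2 * e + Y ^ 2) ≤ Real.log (D ^ 2 * (e + X ^ 2)) :=
      Real.log_le_log hDe h1
    have h3 : Real.log (D ^ 2 * (e + X ^ 2)) = 2 * Real.log D + Real.log (e + X ^ 2) := by
      rw [Real.log_mul (by positivity) (ne_of_gt hE), Real.log_pow]
      push_cast; ring
    rw [hL_def, hLg_def]; linarith
  have hL0 : (0 : ℝ) < L := by linarith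
  have hLg0 : (0 : ℝ) < Lg := by linarith
  -- term 1
  have hT1 : (κ * Y * X ^ 2 + c * P * X ^ 2) / (e + X ^ 2) ≤ κ * (1 + Y) + c * P := by
    rw [div_le_iff₀ hE]
    nlinarith [mul_pos (mul_pos hκ h1Y) he0, mul_nonneg hκ.le (sq_nonneg X),
      mul_pos (mul_pos hc hP) he0]
  -- term 2
  have hr_le : r ≤ X ^ 2 / (e + X ^ 2) := by
    rw [hr_def, div_le_div_iff₀ hDe hE]
    nlinarith
  have hr0 : 0 ≤ r := by rw [hr_def]; positivity
  have hT2 : 2 * c * P * r ^ 2 ≤ 2 * c * P * X ^ 4 / (e + X ^ 2) ^ 2 := by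
    have h1 : r ^ 2 ≤ (X ^ 2 / (e + X ^ 2)) ^ 2 := by
      apply pow_le_pow_left₀ hr0 hr_le
    have h2 : (X ^ 2 / (e + X ^ 2)) ^ 2 = X ^ 4 / (e + X ^ 2) ^ 2 := by
      rw [div_pow]; ring_nf
    rw [mul_div_assoc, ← h2]
    exact mul_le_mul_of_nonneg_left h1 (by positivity)
  -- term 3
  have hX2E : X ^ 2 ≤ e + X ^ 2 := by linarith
  have hX4 : X ^ 4 ≤ (e + X ^ 2) ^ 2 := by
    calc X ^ 4 = (X ^ 2) ^ 2 := by ring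
      _ ≤ (e + X ^ 2) ^ 2 := pow_le_pow_left₀ (sq_nonneg X) hX2E 2
  have hT3 : c * P * X ^ 4 / ((e + X ^ 2) ^ 2 * Lg) ≤ c * P / L := by
    have h1 : X ^ 4 / ((e + X ^ 2) ^ 2 * Lg) ≤ 1 / L := by
      rw [div_le_div_iff₀ (by positivity) hL0]
      have c1 : X ^ 4 * L ≤ (e + X ^ 2) ^ 2 * L := mul_le_mul_of_nonneg_right hX4 hL0.le
      have c2 : (e + X ^ 2) ^ 2 * L ≤ (e + X ^ 2) ^ 2 * Lg :=
        mul_le_mul_of_nonneg_left hLle (by positivity)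
      linarith
    calc c * P * X ^ 4 / ((e + X ^ 2) ^ 2 * Lg)
        = c * P * (X ^ 4 / ((e + X ^ 2) ^ 2 * Lg)) := by ring
      _ ≤ c * P * (1 / L) := mul_le_mul_of_nonneg_left h1 (by positivity)
      _ = c * P / L := by ring
  -- combining
  have hPQ : P * (1 + Y) ^ (1 - 2 * δ) = 1 + Y := by
    rw [hP_def, ← Real.rpow_add h1Y]
    norm_num
  have expand : P * (κ * (1 + Y) ^ (1 - 2 * δ) + c - 2 * c * r ^ 2 + c / L)
      = κ * (P * (1 + Y) ^ (1 - 2 * δ)) + c * P - 2 * c * P * r ^ 2 + c * P / L := by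
    ring
  rw [expand, hPQ]
  linarith
end

section
/- Let κ > 0, D > 0 be real numbers, let δ ≥ 1/2 and c > 0, and assume either δ > 1/2, or δ = 1/2 together with c > κ. Define ϑ : [0,∞) × [0,∞) → ℝ by ϑ(X,Y) = (κ·Y·X² + c·(1+Y)^{2δ}·X²)/(e + X²) − 2c·(1+Y)^{2δ}·X⁴/(e + X²)² + c·(1+Y)^{2δ}·X⁴/((e + X²)²·(1 + log(e + X²))). Then there exists a constant C ∈ ℝ such that ϑ(X,Y) ≤ C for all X ≥ 0 and Y ≥ 0 with Y ≤ D·X. -/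
open Real Filter

/-- Auxiliary: if `δ > 1/2`, then `κY ≤ (1/2)c(1+Y)^{2δ} + M` for some `M`. -/
lemma stmt6_aux (κ c δ : ℝ) (hκ : 0 < κ) (hc : 0 < c) (hδ : 1/2 < δ) :
    ∃ M : ℝ, ∀ Y : ℝ, 0 ≤ Y → κ * Y ≤ (1/2) * c * (1 + Y) ^ (2 * δ) + M := by
  set p := 2 * δ with hp'
  have hp : 1 < p := by rw [hp']; linarith
  set a := κ / ((1/2) * c) with ha
  have ha0 : 0 < a := div_pos hκ (by linarith)
  set Y₀ := max 1 (a ^ (1/(p-1))) with hY₀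
  have hY₀1 : (1:ℝ) ≤ Y₀ := le_max_left _ _
  refine ⟨κ * Y₀, fun Y hY => ?_⟩
  rcases le_total Y Y₀ with h | h
  · have h1 : 0 ≤ (1 + Y) ^ p := Real.rpow_nonneg (by linarith) _
    nlinarith
  · have hY1 : 1 ≤ Y := le_trans hY₀1 h
    have h1 : a ^ (1/(p-1)) ≤ Y := le_trans (le_max_right _ _) h
    have h2 : a ≤ Y ^ (p-1) := by
      have e1 : (a ^ (1/(p-1))) ^ (p-1) = a := by
        rw [← Real.rpow_mul ha0.le, one_div_mul_cancel (by linarith : p - 1 ≠ 0),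
          Real.rpow_one]
      calc a = (a ^ (1/(p-1))) ^ (p-1) := e1.symm
        _ ≤ Y ^ (p-1) :=
          Real.rpow_le_rpow (Real.rpow_nonneg ha0.le _) h1 (by linarith)
    have h3 : Y ^ (p-1) * Y ≤ (1 + Y) ^ p := by
      have e1 : Y ^ p = Y ^ (p-1) * Y := by
        rw [show p = p - 1 + 1 by ring, Real.rpow_add_one (by linarith : Y ≠ 0)]
        ring_nf
      rw [← e1]
      exact Real.rpow_le_rpow (by linarith) (by linarith) (by linarith)
    have h4 : a * Y ≤ Y ^ (p-1) * Y := mul_le_mul_of_nonneg_right h2 hY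
    have h5 : κ = (1/2) * c * a := by rw [ha]; field_simp
    have h6 : 0 ≤ κ * Y₀ := mul_nonneg hκ.le (by linarith)
    nlinarith [mul_le_mul_of_nonneg_left (le_trans h4 h3) (by linarith : (0:ℝ) ≤ (1/2) * c)]

/-- under either `δ > 1/2`, or `δ = 1/2` together with `c > κ`, the functional
`ϑ(X,Y) = (κYX² + c(1+Y)^{2δ}X²)/(e+X²) - 2c(1+Y)^{2δ}X⁴/(e+X²)²
          + c(1+Y)^{2δ}X⁴/((e+X²)²(1+log(e+X²)))`
is bounded above by a constant `C` uniformly over `X, Y ≥ 0` with `Y ≤ D·X`. -/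
theorem stmt6 (κ c D δ : ℝ) (hκ : 0 < κ) (hc : 0 < c) (hD : 0 < D) (hδ : 1 / 2 ≤ δ)
    (hcase : 1 / 2 < δ ∨ (δ = 1 / 2 ∧ κ < c)) :
    ∃ C : ℝ, ∀ X Y : ℝ, 0 ≤ X → 0 ≤ Y → Y ≤ D * X →
      (κ * Y * X ^ 2 + c * (1 + Y) ^ (2 * δ) * X ^ 2) / (Real.exp 1 + X ^ 2)
        - 2 * c * (1 + Y) ^ (2 * δ) * X ^ 4 / (Real.exp 1 + X ^ 2) ^ 2
        + c * (1 + Y) ^ (2 * δ) * X ^ 4 /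
            ((Real.exp 1 + X ^ 2) ^ 2 * (1 + Real.log (Real.exp 1 + X ^ 2)))
      ≤ C := by
  obtain ⟨l, hl0, hl1, M, hA⟩ :
      ∃ l : ℝ, 0 < l ∧ l < 1 ∧ ∃ M : ℝ, ∀ Y : ℝ, 0 ≤ Y →
        κ * Y ≤ l * c * (1 + Y) ^ (2 * δ) + M := by
    rcases hcase with h | ⟨hδe, hκc⟩
    · exact ⟨1/2, by norm_num, by norm_num, stmt6_aux κ c δ hκ hc h⟩
    · refine ⟨(c + κ)/(2*c), by positivity, ?_, 0, fun Y hY => ?_⟩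
      · rw [div_lt_one (by linarith)]; linarith
      · have h1 : (2:ℝ) * δ = 1 := by rw [hδe]; norm_num
        rw [h1, Real.rpow_one]
        have h2 : (c + κ)/(2*c) * c = (c + κ)/2 := by field_simp
        rw [h2]
        nlinarith
  set ε := (1 - l)/5 with hε
  have hε0 : 0 < ε := by rw [hε]; linarith
  have hε1 : ε < 1/5 := by rw [hε]; linarith
  set B := max ((1 - ε) * Real.exp 1 / ε) (Real.exp (1/ε - 1)) with hB
  have hB0 : 0 ≤ B := le_trans (Real.exp_pos _).le (le_max_right _ _)
  set S := Real.sqrt B with hS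
  have hS0 : 0 ≤ S := Real.sqrt_nonneg _
  set C₁ := κ * (D * S) + 2 * (c * (1 + D * S) ^ (2 * δ)) with hC₁
  refine ⟨max C₁ M, fun X Y hX hY hYX => ?_⟩
  set E := Real.exp 1 + X ^ 2 with hEdef
  have hE0 : 0 < E := by rw [hEdef]; positivity
  have hexpE : Real.exp 1 ≤ E := by rw [hEdef]; nlinarith [sq_nonneg X]
  have hlogE : 1 ≤ Real.log E := (Real.le_log_iff_exp_le hE0).mpr hexpE
  set L := 1 + Real.log E with hLdef
  have hL2 : 2 ≤ L := by rw [hLdef]; linarith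
  have hL0 : 0 < L := by linarith
  set t := X ^ 2 / E with ht
  have ht0 : 0 ≤ t := by rw [ht]; positivity
  have ht1 : t ≤ 1 := by
    rw [ht, div_le_one hE0, hEdef]; nlinarith [Real.exp_pos 1]
  have key : (κ * Y * X ^ 2 + c * (1 + Y) ^ (2 * δ) * X ^ 2) / E
      - 2 * c * (1 + Y) ^ (2 * δ) * X ^ 4 / E ^ 2
      + c * (1 + Y) ^ (2 * δ) * X ^ 4 / (E ^ 2 * L)
      = (κ * Y + c * (1 + Y) ^ (2 * δ)) * t
        - 2 * (c * (1 + Y) ^ (2 * δ)) * t ^ 2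
        + (c * (1 + Y) ^ (2 * δ)) * t ^ 2 / L := by
    rw [ht]; field_simp
  rw [key]
  clear key
  set P := c * (1 + Y) ^ (2 * δ) with hPdef
  have hP0 : 0 < P := by
    rw [hPdef]; exact mul_pos hc (Real.rpow_pos_of_pos (by linarith) _)
  clear_value ε B S C₁ E L t P
  rcases le_total (X ^ 2) B with hXB | hXB
  · -- small X
    have hXS : X ≤ S := by
      rw [hS]
      calc X = Real.sqrt (X ^ 2) := by rw [Real.sqrt_sq hX]
        _ ≤ Real.sqrt B := Real.sqrt_le_sqrt hXB
    have hYS : Y ≤ D * S := le_trans hYX (mul_le_mul_of_nonneg_left hXS hD.le)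
    have hPle : P ≤ c * (1 + D * S) ^ (2 * δ) := by
      rw [hPdef]
      exact mul_le_mul_of_nonneg_left
        (Real.rpow_le_rpow (by linarith) (by linarith) (by linarith)) hc.le
    have ht21 : t ^ 2 ≤ 1 := pow_le_one₀ ht0 ht1
    have h3 : P * t ^ 2 / L ≤ P := by
      rw [div_le_iff₀ hL0]
      calc P * t ^ 2 ≤ P * 1 := mul_le_mul_of_nonneg_left ht21 hP0.le
        _ ≤ P * L := mul_le_mul_of_nonneg_left (by linarith) hP0.le
    have h4 : (κ * Y + P) * t ≤ (κ * Y + P) * 1 :=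
      mul_le_mul_of_nonneg_left ht1 (by positivity)
    have h5 : κ * Y ≤ κ * (D * S) := mul_le_mul_of_nonneg_left hYS hκ.le
    have h6 : 0 ≤ 2 * P * t ^ 2 := by positivity
    have : (κ * Y + P) * t - 2 * P * t ^ 2 + P * t ^ 2 / L ≤ C₁ := by
      rw [hC₁]; linarith
    exact le_trans this (le_max_left _ _)
  · -- large X
    have h1 : (1 - ε) * Real.exp 1 / ε ≤ X ^ 2 := le_trans (le_max_left _ _) (hB ▸ hXB)
    have h1' : (1 - ε) * Real.exp 1 ≤ X ^ 2 * ε := (div_le_iff₀ hε0).mp h1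
    have htε : 1 - ε ≤ t := by
      rw [ht, le_div_iff₀ hE0, hEdef]
      have e1 : (1 - ε) * (Real.exp 1 + X ^ 2)
          = (1 - ε) * Real.exp 1 + X ^ 2 - ε * X ^ 2 := by ring
      linarith
    have hexp : Real.exp (1/ε - 1) ≤ X ^ 2 := le_trans (le_max_right _ _) (hB ▸ hXB)
    have hlog2 : 1/ε - 1 ≤ Real.log E := by
      apply (Real.le_log_iff_exp_le hE0).mpr
      rw [hEdef]; linarith [hexp, sq_nonneg X, Real.exp_pos 1]
    have hLε : 1 ≤ L * ε := by
      have h5 : 1/ε ≤ L := by rw [hLdef]; linarith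
      calc (1:ℝ) = (1/ε) * ε := by field_simp
        _ ≤ L * ε := mul_le_mul_of_nonneg_right h5 hε0.le
    have ht21 : t ^ 2 ≤ 1 := pow_le_one₀ ht0 ht1
    have h3 : P * t ^ 2 / L ≤ P * ε := by
      rw [div_le_iff₀ hL0]
      have e1 : P * 1 ≤ P * (L * ε) := mul_le_mul_of_nonneg_left hLε hP0.le
      have e2 : P * t ^ 2 ≤ P * 1 := mul_le_mul_of_nonneg_left ht21 hP0.le
      calc P * t ^ 2 ≤ P * (L * ε) := le_trans e2 e1
        _ = P * ε * L := by ring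
    have ht2 : (1 - ε) ^ 2 ≤ t ^ 2 := pow_le_pow_left₀ (by linarith) htε 2
    have hfin : (κ * Y + P) * t - 2 * P * t ^ 2 + P * t ^ 2 / L ≤ κ * Y - l * P := by
      have hεl : 5 * ε = 1 - l := by rw [hε]; ring
      have c2 : κ * Y * t ≤ κ * Y * 1 :=
        mul_le_mul_of_nonneg_left ht1 (mul_nonneg hκ.le hY)
      have c3 : P * t ≤ P * 1 := mul_le_mul_of_nonneg_left ht1 hP0.le
      have c4 : P * (1 - ε) ^ 2 ≤ P * t ^ 2 := mul_le_mul_of_nonneg_left ht2 hP0.le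
      have c7 : 0 ≤ P * ε ^ 2 := mul_nonneg hP0.le (sq_nonneg _)
      have c8 : 5 * ε * P = (1 - l) * P := by rw [hεl]
      have c1 : (κ * Y + P) * t = κ * Y * t + P * t := by ring
      rw [c1]
      linarith only [h3, c2, c3, c4, c7, c8]
    have hfin2 : κ * Y - l * P ≤ M := by
      have := hA Y hY
      have hlp : l * c * (1 + Y) ^ (2 * δ) = l * P := by rw [hPdef]; ring
      linarith [hlp ▸ this]
    exact le_trans hfin (le_trans hfin2 (le_max_right _ _))
end

section
/- (Gyöngy–Krylov criterion) Let X be a Polish space (separable, completely metrizable, with a fixed compatible metric dist and its Borel σ-algebra), let (Ω, F, P) be a probability space, and let (Y_j)_{j ≥ 0} be a sequence of Borel-measurable maps Y_j : Ω → X. Then the following are equivalent: (i) there exists a Borel-measurable Y : Ω → X such that for every ε > 0, P({ω : dist(Y_j(ω), Y(ω)) > ε}) → 0 as j → ∞ (i.e., (Y_j) converges in probability); (ii) for every pair of strictly increasing sequences (j_k)_{k ≥ 0} and (l_k)_{k ≥ 0} of natural numbers, the sequence of joint laws μ_k = P ∘ (Y_{j_k}, Y_{l_k})^{−1} on X ×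 X has a subsequence that converges weakly to some Borel probability measure μ on X × X satisfying μ({(u, v) ∈ X × X : u = v}) = 1. -/
/-!
Convergence in probability of `Y` makes every pair `(Y (j k), Y (l k))` converge in probability,
hence in law, to `(Ylim, Ylim)`, whose law lives on the diagonal.

Conversely, if `Y` were not Cauchy in probability, there would be `ε, δ > 0` and pairs of
subsequences with `δ ≤ P {ε ≤ dist (Y (j k)) (Y (l k))}`; by the portmanteau theorem for the
closed set `{ε ≤ dist}` this bound passes to every weak limit of the joint laws, which therefore
cannot live on the diagonal. A sequence that is Cauchy in probability converges in probability:
a subsequence with `P {2⁻ᵏ ≤ dist (Y (ψ (k + 1))) (Y (ψ k))} ≤ 2⁻ᵏ` converges almost surely by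
Borel–Cantelli and completeness, and drags the whole sequence along.
-/

open MeasureTheory Filter

open scoped Topology ENNReal

theorem Filter.extraction_of_frequently_atTop_prod {p : ℕ × ℕ → Prop}
    (h : ∃ᶠ n in atTop, p n) :
    ∃ j l : ℕ → ℕ, StrictMono j ∧ StrictMono l ∧ ∀ k, p (j k, l k) := by
  choose b hb hpb using fun n : ℕ => frequently_atTop.1 h (n, n)
  obtain ⟨φ, hφ, hφ_fst⟩ := strictMono_subseq_of_id_le fun n => (hb n).1
  obtain ⟨φ', hφ', hφ'_snd⟩ :=
    strictMono_subseq_of_id_le fun n => (hφ.id_le n).trans (hb (φ n)).2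
  exact ⟨fun k => (b (φ (φ' k))).1, fun k => (b (φ (φ' k))).2, hφ_fst.comp hφ', hφ'_snd,
    fun k => hpb _⟩

namespace MeasureTheory

variable {α ι E F : Type*} [MeasurableSpace α] {μ : Measure α}

lemma tendstoInMeasure_iff_lt_dist [PseudoMetricSpace E] {f : ι → α → E} {l : Filter ι}
    {g : α → E} :
    TendstoInMeasure μ f l g ↔
      ∀ ε, 0 < ε → Tendsto (fun i => μ {x | ε < dist (f i x) (g x)}) l (𝓝 0) := by
  rw [tendstoInMeasure_iff_dist]
  refine ⟨fun h ε hε => ?_, fun h ε hε => ?_⟩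
  · exact tendsto_of_tendsto_of_tendsto_of_le_of_le tendsto_const_nhds (h ε hε)
      (fun _ => zero_le) fun _ => measure_mono <| Set.ofPred_subset_ofPred.2 fun _ hx => hx.le
  · exact tendsto_of_tendsto_of_tendsto_of_le_of_le tendsto_const_nhds (h (ε / 2) (by positivity))
      (fun _ => zero_le) fun _ => measure_mono <| Set.ofPred_subset_ofPred.2 fun _ hx =>
        (half_lt_self hε).trans_le hx

lemma TendstoInMeasure.prodMk [PseudoEMetricSpace E] [PseudoEMetricSpace F] {l : Filter ι}
    {f : ι → α → E} {f' : ι → α → F} {g : α → E} {g' : α → F}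
    (h : TendstoInMeasure μ f l g) (h' : TendstoInMeasure μ f' l g') :
    TendstoInMeasure μ (fun i x => (f i x, f' i x)) l (fun x => (g x, g' x)) := by
  intro ε hε
  have hsum := (h ε hε).add (h' ε hε)
  rw [add_zero] at hsum
  refine tendsto_of_tendsto_of_tendsto_of_le_of_le tendsto_const_nhds hsum
    (fun _ => zero_le) fun i => (measure_mono fun x hx => ?_).trans (measure_union_le _ _)
  simpa only [Set.mem_ofPred_eq, Prod.edist_eq, le_max_iff, Set.mem_union] using hx

def CauchyInMeasure [PseudoMetricSpace E] (μ : Measure α) (f : ℕ → α → E) : Prop :=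
  ∀ ε, 0 < ε → Tendsto (fun n : ℕ × ℕ => μ {x | ε ≤ dist (f n.1 x) (f n.2 x)}) atTop (𝓝 0)

lemma ae_cauchySeq_of_measure_le_dist_le_geometric [PseudoMetricSpace E] {u : ℕ → α → E}
    (hu : ∀ k, μ {x | (2⁻¹ : ℝ) ^ k ≤ dist (u (k + 1) x) (u k x)} ≤ 2⁻¹ ^ k) :
    ∀ᵐ x ∂μ, CauchySeq fun k => u k x := by
  have hsum : ∑' k, μ {x | (2⁻¹ : ℝ) ^ k ≤ dist (u (k + 1) x) (u k x)} ≠ ∞ :=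
    ne_top_of_le_ne_top (by simp [ENNReal.tsum_geometric]) (ENNReal.tsum_le_tsum hu)
  filter_upwards [ae_eventually_notMem hsum] with x hx
  have hgeom := summable_geometric_of_lt_one (by norm_num) (by norm_num : (2⁻¹ : ℝ) < 1)
  refine cauchySeq_of_summable_dist <| hgeom.of_norm_bounded_eventually_nat ?_
  filter_upwards [hx] with k hk
  simp only [not_le] at hk
  rw [Real.norm_of_nonneg dist_nonneg, dist_comm]
  exact hk.le

namespace CauchyInMeasure

variable [PseudoMetricSpace E] {f : ℕ → α → E}

lemma exists_strictMono_measure_le_dist_le_geometric (hf : CauchyInMeasure μ f) :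
    ∃ ψ : ℕ → ℕ, StrictMono ψ ∧
      ∀ k, μ {x | (2⁻¹ : ℝ) ^ k ≤ dist (f (ψ (k + 1)) x) (f (ψ k) x)} ≤ 2⁻¹ ^ k := by
  have hev : ∀ k, ∀ᶠ m in atTop, ∀ n ≥ m,
      μ {x | (2⁻¹ : ℝ) ^ k ≤ dist (f n x) (f m x)} ≤ 2⁻¹ ^ k := by
    intro k
    obtain ⟨N, hN⟩ := eventually_atTop_prod_self.1 <|
      (hf ((2⁻¹ : ℝ) ^ k) (by positivity)).eventually
        (ge_mem_nhds (ENNReal.pow_pos (by norm_num : (0 : ℝ≥0∞) < 2⁻¹) k))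
    exact eventually_atTop.2 ⟨N, fun m hm n hn => hN n m (hm.trans hn) hm⟩
  obtain ⟨ψ, hψ, hψ_le⟩ := extraction_forall_of_eventually hev
  exact ⟨ψ, hψ, fun k => hψ_le k _ (hψ.monotone k.le_succ)⟩

lemma tendstoInMeasure_of_subseq (hf : CauchyInMeasure μ f) {ψ : ℕ → ℕ}
    (hψ : Tendsto ψ atTop atTop) {g : α → E} (hg : TendstoInMeasure μ (fun k => f (ψ k)) atTop g) :
    TendstoInMeasure μ f atTop g := by
  rw [tendstoInMeasure_iff_dist] at hg ⊢
  intro ε hε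
  have hpair : Tendsto (fun n => (n, ψ n)) atTop atTop := by
    rw [← prod_atTop_atTop_eq]; exact tendsto_id.prodMk hψ
  have hsum := ((hf _ (half_pos hε)).comp hpair).add (hg _ (half_pos hε))
  rw [add_zero] at hsum
  refine tendsto_of_tendsto_of_tendsto_of_le_of_le tendsto_const_nhds hsum
    (fun _ => zero_le) fun n => (measure_mono fun x hx => ?_).trans (measure_union_le _ _)
  by_contra hx'
  simp only [Set.mem_union, Set.mem_ofPred_eq, not_or, not_le] at hx hx'
  linarith [dist_triangle (f n x) (f (ψ n) x) (g x)]

lemma exists_tendstoInMeasure [CompleteSpace E] [MeasurableSpace E] [BorelSpace E]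
    [SecondCountableTopology E] [IsFiniteMeasure μ] (hf_meas : ∀ n, Measurable (f n))
    (hf : CauchyInMeasure μ f) : ∃ g : α → E, Measurable g ∧ TendstoInMeasure μ f atTop g := by
  obtain ⟨ψ, hψ, hψ_geom⟩ := hf.exists_strictMono_measure_le_dist_le_geometric
  have hlim : ∀ᵐ x ∂μ, ∃ a, Tendsto (fun k => f (ψ k) x) atTop (𝓝 a) := by
    filter_upwards [ae_cauchySeq_of_measure_le_dist_le_geometric
      (u := fun k => f (ψ k)) hψ_geom] with x hx
    exact cauchySeq_tendsto_of_complete hx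
  obtain ⟨g, hg_meas, hg⟩ :=
    measurable_limit_of_tendsto_metrizable_ae (fun k => (hf_meas (ψ k)).aemeasurable) hlim
  exact ⟨g, hg_meas, hf.tendstoInMeasure_of_subseq hψ.tendsto_atTop <|
    tendstoInMeasure_of_tendsto_ae (fun k => (hf_meas (ψ k)).aestronglyMeasurable) hg⟩

end CauchyInMeasure

lemma ProbabilityMeasure.tendsto_measure_le_dist_of_tendsto_of_diagonal {X ι : Type*}
    [MetricSpace X] [MeasurableSpace X] [BorelSpace X] [SecondCountableTopology X]
    {L : Filter ι} {νs : ι → ProbabilityMeasure (X × X)} {ν : ProbabilityMeasure (X × X)}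
    (hν : Tendsto νs L (𝓝 ν)) (hdiag : (ν : Measure (X × X)) {p | p.1 = p.2} = 1)
    {ε : ℝ} (hε : 0 < ε) :
    Tendsto (fun i => (νs i : Measure (X × X)) {p | ε ≤ dist p.1 p.2}) L (𝓝 0) := by
  have hC : IsClosed {p : X × X | ε ≤ dist p.1 p.2} := isClosed_le continuous_const continuous_dist
  have hC_null : (ν : Measure (X × X)) {p : X × X | ε ≤ dist p.1 p.2} = 0 := by
    refine measure_mono_null (t := {p : X × X | p.1 = p.2}ᶜ) (fun p hp hp' => ?_)
      ((prob_compl_eq_zero_iff (isClosed_eq continuous_fst continuous_snd).measurableSet).2 hdiag)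
    rw [Set.mem_ofPred_eq] at hp hp'
    rw [hp', dist_self] at hp
    exact hε.not_ge hp
  simpa [hC_null] using
    ProbabilityMeasure.tendsto_measure_of_null_frontier_of_tendsto' hν
      (measure_mono_null hC.frontier_subset hC_null)

def GyongyKrylovCondition {X Ω : Type*} [MetricSpace X] [MeasurableSpace X] [MeasurableSpace Ω]
    (P : Measure Ω) (Y : ℕ → Ω → X) : Prop :=
  ∀ j l : ℕ → ℕ, StrictMono j → StrictMono l →
    ∃ φ : ℕ → ℕ, StrictMono φ ∧
      ∃ μ : Measure (X × X), IsProbabilityMeasure μ ∧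
        (∀ f : BoundedContinuousFunction (X × X) ℝ,
          Tendsto
            (fun k => ∫ p, f p ∂(P.map (fun ω => (Y (j (φ k)) ω, Y (l (φ k)) ω))))
            atTop (𝓝 (∫ p, f p ∂μ))) ∧
        μ {p : X × X | p.1 = p.2} = 1

section GyongyKrylov

variable {X Ω : Type*} [MetricSpace X] [MeasurableSpace X] [BorelSpace X]
  [SecondCountableTopology X] [MeasurableSpace Ω] {P : Measure Ω} [IsProbabilityMeasure P]
  {Y : ℕ → Ω → X}

lemma gyongyKrylovCondition_of_tendstoInMeasure (hY : ∀ n, Measurable (Y n)) {Ylim : Ω → X}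
    (h : TendstoInMeasure P Y atTop Ylim) : GyongyKrylovCondition P Y := by
  intro j l hj hl
  have hpair := ((h.comp hj.tendsto_atTop).prodMk (h.comp hl.tendsto_atTop)).tendstoInDistribution
    fun k => ((hY _).prodMk (hY _)).aemeasurable
  refine ⟨id, strictMono_id, P.map fun ω => (Ylim ω, Ylim ω),
    Measure.isProbabilityMeasure_map hpair.aemeasurable_limit,
    ProbabilityMeasure.tendsto_iff_forall_integral_tendsto.1 hpair.tendsto, ?_⟩
  rw [Measure.map_apply_of_aemeasurable hpair.aemeasurable_limit
    (isClosed_eq continuous_fst continuous_snd).measurableSet]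
  simp

lemma GyongyKrylovCondition.cauchyInMeasure (hY : ∀ n, Measurable (Y n))
    (h : GyongyKrylovCondition P Y) : CauchyInMeasure P Y := by
  intro ε hε
  refine tendsto_order.2 ⟨fun a ha => (ENNReal.not_lt_zero ha).elim, fun δ hδ => ?_⟩
  by_contra hfreq
  simp only [not_eventually, not_lt] at hfreq
  obtain ⟨j, l, hj, hl, hjl⟩ := extraction_of_frequently_atTop_prod hfreq
  obtain ⟨φ, -, μ, hμ, hconv, hdiag⟩ := h j l hj hl
  have hpair : ∀ k, Measurable fun ω => (Y (j (φ k)) ω, Y (l (φ k)) ω) :=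
    fun k => (hY _).prodMk (hY _)
  have hlaw := ProbabilityMeasure.tendsto_measure_le_dist_of_tendsto_of_diagonal
    (νs := fun k => ⟨_, Measure.isProbabilityMeasure_map (hpair k).aemeasurable⟩) (ν := ⟨μ, hμ⟩)
    (ProbabilityMeasure.tendsto_iff_forall_integral_tendsto.2 hconv) hdiag hε
  obtain ⟨k, hk⟩ := (hlaw.eventually (gt_mem_nhds hδ)).exists
  rw [ProbabilityMeasure.coe_mk, Measure.map_apply (hpair k)
    (isClosed_le continuous_const continuous_dist).measurableSet] at hk
  exact (hjl (φ k)).not_gt hk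

end GyongyKrylov

end MeasureTheory

/-- Gyöngy–Krylov criterion: a sequence of `X`-valued random variables on a
Polish space `X` converges in probability if and only if every pair of subsequences has joint
laws admitting a weakly convergent sub-subsequence whose limit is concentrated on the
diagonal. -/
theorem stmt11 {X : Type*} [MetricSpace X] [TopologicalSpace.SeparableSpace X]
    [CompleteSpace X] [MeasurableSpace X] [BorelSpace X]
    {Ω : Type*} [MeasurableSpace Ω] (P : Measure Ω) [IsProbabilityMeasure P]
    (Y : ℕ → Ω → X) (hY : ∀ j, Measurable (Y j)) :
    (∃ Ylim : Ω → X, Measurable Ylim ∧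
        ∀ ε : ℝ, 0 < ε →
          Tendsto (fun j => P {ω | ε < dist (Y j ω) (Ylim ω)}) atTop (nhds 0)) ↔
    (∀ j l : ℕ → ℕ, StrictMono j → StrictMono l →
        ∃ φ : ℕ → ℕ, StrictMono φ ∧
          ∃ μ : Measure (X × X), IsProbabilityMeasure μ ∧
            (∀ f : BoundedContinuousFunction (X × X) ℝ,
              Tendsto
                (fun k => ∫ p, f p ∂(P.map (fun ω => (Y (j (φ k)) ω, Y (l (φ k)) ω))))
                atTop (nhds (∫ p, f p ∂μ))) ∧
            μ {p : X × X | p.1 = p.2} = 1) := by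
  constructor
  · rintro ⟨Ylim, -, hYlim⟩
    exact gyongyKrylovCondition_of_tendstoInMeasure hY (tendstoInMeasure_iff_lt_dist.2 hYlim)
  · intro h
    obtain ⟨Ylim, hYlim_meas, hYlim⟩ :=
      (GyongyKrylovCondition.cauchyInMeasure hY h).exists_tendstoInMeasure hY
    exact ⟨Ylim, hYlim_meas, tendstoInMeasure_iff_lt_dist.1 hYlim⟩
end
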